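/- Let C_1 and C_2 be bicolored directed cycles. Then C_1 □ C_2 has a bikernel by monochromatic paths if and only if either both C_1 and C_2 have bikernels, or both are monochromatic cycles of the same length and opposite colors. -/

import Mathlib

/-- A bicolored digraph is given by two arc relations `A1` (color-1 arcs) and `A2`
(color-2 arcs). A monochromatic path of color `i` is a nonempty chain of `Ai`-arcs,
i.e. `Relation.TransGen Ai`. A set `B` is a bikernel by monochromatic paths if it is
nonempty, independent by monochromatic paths, absorbent with color 1 and dominant
with color 2. -/
def IsBikernel {V : Type*} (A1 A2 : V → V → Prop) (B : Set V) : Prop :=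
  B.Nonempty ∧
  (∀ u ∈ B, ∀ v ∈ B, u ≠ v →
    ¬ Relation.TransGen A1 u v ∧ ¬ Relation.TransGen A2 u v) ∧
  (∀ v, v ∉ B → ∃ b ∈ B, Relation.TransGen A1 v b) ∧
  (∀ v, v ∉ B → ∃ b ∈ B, Relation.TransGen A2 b v)

/-- The bicolored directed cycle on `Fin n` with arcs `(x_i, x_{(i+1) mod n})`, the
arc leaving `x_i` having color `c i` (color 1 is `0`, color 2 is `1`). -/
def cycArc (n : ℕ) (c : ℕ → Fin 2) (col : Fin 2) : Fin n → Fin n → Prop :=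
  fun x y => (y : ℕ) = ((x : ℕ) + 1) % n ∧ c (x : ℕ) = col

/-- The arc relation of the Cartesian product of two digraphs restricted to one
color. -/
def boxArc {V W : Type*} (AG : V → V → Prop) (AH : W → W → Prop) :
    V × W → V × W → Prop :=
  fun p q => (p.1 = q.1 ∧ AH p.2 q.2) ∨ (p.2 = q.2 ∧ AG p.1 q.1)

/-!
A product of bikernels is a bikernel of the product, and an alternating cycle has the bikernel
formed by the tails of its color-2 arcs. Conversely, a vertex without outgoing color-1 arcs or
without incoming color-2 arcs lies in every bikernel, and no arc joins two bikernel vertices. So if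
one factor has two consecutive arcs of color `γ`, the other factor has no arc of color `γ`; applied
twice, both factors are monochromatic of opposite colors. Then color-1 paths move along one factor
only and color-2 paths along the other, and the bikernels are exactly the graphs of bijections
between the two vertex sets.
-/

open Relation

theorem fin_two_eq_of_ne_of_ne {a b c : Fin 2} (ha : a ≠ c) (hb : b ≠ c) : a = b := by
  omega

theorem Fin.add_one_ne_self {n : ℕ} [NeZero n] (hn : 2 ≤ n) (x : Fin n) : x + 1 ≠ x := by
  simp only [ne_eq, add_eq_left, Fin.one_eq_zero_iff]
  omega

theorem Relation.reflTransGen_iff_eq_of_forall_not_to {α : Type*} {r : α → α → Prop} {a b : α}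
    (h : ∀ a, ¬ r a b) : ReflTransGen r a b ↔ a = b := by
  rw [← reflTransGen_swap, reflTransGen_iff_eq h]

theorem Relation.reflTransGen_comap_equiv_iff {α β : Type*} {r : β → β → Prop} (e : α ≃ β)
    {a b : α} : ReflTransGen (fun a b => r (e a) (e b)) a b ↔ ReflTransGen r (e a) (e b) := by
  refine ⟨fun h => ReflTransGen.lift (p := r) e (fun _ _ h => h) a b h, fun h => ?_⟩
  simpa [Function.onFun] using ReflTransGen.lift (r := r) (p := fun a b => r (e a) (e b)) e.symm
    (fun x y h => by simpa [Function.onFun] using h) _ _ h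

section Bikernel

variable {V : Type*} {A1 A2 : V → V → Prop} {B : Set V}

theorem isBikernel_iff_reflTransGen :
    IsBikernel A1 A2 B ↔ B.Nonempty ∧
      (∀ u ∈ B, ∀ v ∈ B, ReflTransGen A1 u v → u = v) ∧
      (∀ u ∈ B, ∀ v ∈ B, ReflTransGen A2 u v → u = v) ∧
      (∀ v, ∃ b ∈ B, ReflTransGen A1 v b) ∧
      (∀ v, ∃ b ∈ B, ReflTransGen A2 b v) := by
  simp only [IsBikernel, reflTransGen_iff_eq_or_transGen]
  constructor
  · rintro ⟨hne, hind, habs, hdom⟩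
    refine ⟨hne, ?_, ?_, fun v => ?_, fun v => ?_⟩
    · rintro u hu v hv (h | h)
      exacts [h.symm, by_contra fun huv => (hind u hu v hv huv).1 h]
    · rintro u hu v hv (h | h)
      exacts [h.symm, by_contra fun huv => (hind u hu v hv huv).2 h]
    · by_cases hv : v ∈ B
      · exact ⟨v, hv, .inl rfl⟩
      · obtain ⟨b, hb, h⟩ := habs v hv
        exact ⟨b, hb, .inr h⟩
    · by_cases hv : v ∈ B
      · exact ⟨v, hv, .inl rfl⟩
      · obtain ⟨b, hb, h⟩ := hdom v hv
        exact ⟨b, hb, .inr h⟩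
  · rintro ⟨hne, hind1, hind2, habs, hdom⟩
    refine ⟨hne, fun u hu v hv huv => ⟨fun h => huv ?_, fun h => huv ?_⟩, fun v hv => ?_,
      fun v hv => ?_⟩
    · exact hind1 u hu v hv (.inr h)
    · exact hind2 u hu v hv (.inr h)
    · obtain ⟨b, hb, rfl | h⟩ := habs v
      exacts [absurd hb hv, ⟨b, hb, h⟩]
    · obtain ⟨b, hb, rfl | h⟩ := hdom v
      exacts [absurd hb hv, ⟨b, hb, h⟩]

namespace IsBikernel

theorem eq_of_reflTransGen₁ (hB : IsBikernel A1 A2 B) {u v : V} (hu : u ∈ B) (hv : v ∈ B)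
    (h : ReflTransGen A1 u v) : u = v :=
  (isBikernel_iff_reflTransGen.1 hB).2.1 u hu v hv h

theorem eq_of_reflTransGen₂ (hB : IsBikernel A1 A2 B) {u v : V} (hu : u ∈ B) (hv : v ∈ B)
    (h : ReflTransGen A2 u v) : u = v :=
  (isBikernel_iff_reflTransGen.1 hB).2.2.1 u hu v hv h

theorem exists_reflTransGen₁ (hB : IsBikernel A1 A2 B) (v : V) :
    ∃ b ∈ B, ReflTransGen A1 v b :=
  (isBikernel_iff_reflTransGen.1 hB).2.2.2.1 v

theorem exists_reflTransGen₂ (hB : IsBikernel A1 A2 B) (v : V) :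
    ∃ b ∈ B, ReflTransGen A2 b v :=
  (isBikernel_iff_reflTransGen.1 hB).2.2.2.2 v

theorem mem_of_forall_not_out₁ (hB : IsBikernel A1 A2 B) {v : V} (hv : ∀ w, ¬ A1 v w) :
    v ∈ B := by
  obtain ⟨b, hb, h⟩ := hB.exists_reflTransGen₁ v
  rwa [(reflTransGen_iff_eq hv).1 h] at hb

theorem mem_of_forall_not_in₂ (hB : IsBikernel A1 A2 B) {v : V} (hv : ∀ w, ¬ A2 w v) :
    v ∈ B := by
  obtain ⟨b, hb, h⟩ := hB.exists_reflTransGen₂ v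
  rwa [(reflTransGen_iff_eq_of_forall_not_to hv).1 h] at hb

theorem comap_equiv {W : Type*} {A1 A2 : W → W → Prop} {B : Set W}
    (hB : IsBikernel A1 A2 B) (e : V ≃ W) :
    IsBikernel (fun a b => A1 (e a) (e b)) (fun a b => A2 (e a) (e b)) (e ⁻¹' B) := by
  rw [isBikernel_iff_reflTransGen] at hB ⊢
  obtain ⟨⟨b, hb⟩, hind1, hind2, habs, hdom⟩ := hB
  simp only [reflTransGen_comap_equiv_iff, Set.mem_preimage]
  refine ⟨⟨e.symm b, by simpa⟩, fun u hu v hv h => e.injective (hind1 _ hu _ hv h),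
    fun u hu v hv h => e.injective (hind2 _ hu _ hv h), fun v => ?_, fun v => ?_⟩
  · obtain ⟨b, hb, h⟩ := habs (e v)
    exact ⟨e.symm b, by simpa using hb, by simpa using h⟩
  · obtain ⟨b, hb, h⟩ := hdom (e v)
    exact ⟨e.symm b, by simpa using hb, by simpa using h⟩

end IsBikernel

end Bikernel

section Box

variable {V W : Type*} {G G1 G2 : V → V → Prop} {H H1 H2 : W → W → Prop}

theorem Relation.ReflTransGen.boxArc_fst {p q : V × W} (h : ReflTransGen (boxArc G H) p q) :
    ReflTransGen G p.1 q.1 :=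
  h.lift' Prod.fst fun p q h => by
    rcases h with ⟨h, -⟩ | ⟨-, h⟩
    exacts [show ReflTransGen G p.1 q.1 from h ▸ .refl, .single h]

theorem Relation.ReflTransGen.boxArc_snd {p q : V × W} (h : ReflTransGen (boxArc G H) p q) :
    ReflTransGen H p.2 q.2 :=
  h.lift' Prod.snd fun p q h => by
    rcases h with ⟨-, h⟩ | ⟨h, -⟩
    exacts [.single h, show ReflTransGen H p.2 q.2 from h ▸ .refl]

theorem Relation.ReflTransGen.boxArc_left {a a' : V} (h : ReflTransGen G a a') (b : W) :
    ReflTransGen (boxArc G H) (a, b) (a', b) :=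
  h.lift (fun a => (a, b)) fun _ _ h => .inr ⟨rfl, h⟩

theorem Relation.ReflTransGen.boxArc_right (a : V) {b b' : W} (h : ReflTransGen H b b') :
    ReflTransGen (boxArc G H) (a, b) (a, b') :=
  h.lift (fun b => (a, b)) fun _ _ h => .inl ⟨rfl, h⟩

theorem not_boxArc_out {p : V × W} (hG : ∀ a, ¬ G p.1 a) (hH : ∀ b, ¬ H p.2 b) (q : V × W) :
    ¬ boxArc G H p q := by
  rintro (⟨-, h⟩ | ⟨-, h⟩)
  exacts [hH _ h, hG _ h]

theorem not_boxArc_in {p : V × W} (hG : ∀ a, ¬ G a p.1) (hH : ∀ b, ¬ H b p.2) (q : V × W) :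
    ¬ boxArc G H q p := by
  rintro (⟨-, h⟩ | ⟨-, h⟩)
  exacts [hH _ h, hG _ h]

theorem IsBikernel.prod {B1 : Set V} {B2 : Set W} (hB1 : IsBikernel G1 G2 B1)
    (hB2 : IsBikernel H1 H2 B2) : IsBikernel (boxArc G1 H1) (boxArc G2 H2) (B1 ×ˢ B2) := by
  refine isBikernel_iff_reflTransGen.2 ⟨hB1.1.prod hB2.1, ?_, ?_, ?_, ?_⟩
  · rintro u ⟨hu1, hu2⟩ v ⟨hv1, hv2⟩ h
    exact Prod.ext (hB1.eq_of_reflTransGen₁ hu1 hv1 h.boxArc_fst)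
      (hB2.eq_of_reflTransGen₁ hu2 hv2 h.boxArc_snd)
  · rintro u ⟨hu1, hu2⟩ v ⟨hv1, hv2⟩ h
    exact Prod.ext (hB1.eq_of_reflTransGen₂ hu1 hv1 h.boxArc_fst)
      (hB2.eq_of_reflTransGen₂ hu2 hv2 h.boxArc_snd)
  · rintro ⟨a, b⟩
    obtain ⟨a', ha', ha⟩ := hB1.exists_reflTransGen₁ a
    obtain ⟨b', hb', hb⟩ := hB2.exists_reflTransGen₁ b
    exact ⟨(a', b'), ⟨ha', hb'⟩, (ha.boxArc_left b).trans (hb.boxArc_right a')⟩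
  · rintro ⟨a, b⟩
    obtain ⟨a', ha', ha⟩ := hB1.exists_reflTransGen₂ a
    obtain ⟨b', hb', hb⟩ := hB2.exists_reflTransGen₂ b
    exact ⟨(a', b'), ⟨ha', hb'⟩, (ha.boxArc_left b').trans (hb.boxArc_right a)⟩

theorem IsBikernel.boxArc_swap {B : Set (V × W)}
    (hB : IsBikernel (boxArc G1 H1) (boxArc G2 H2) B) :
    IsBikernel (boxArc H1 G1) (boxArc H2 G2) (Prod.swap ⁻¹' B) := by
  have hswap : ∀ (G : V → V → Prop) (H : W → W → Prop),
      (fun p q : W × V => boxArc G H p.swap q.swap) = boxArc H G := by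
    intro G H
    funext p q
    exact propext or_comm
  simpa only [Equiv.coe_prodComm, hswap] using hB.comap_equiv (Equiv.prodComm W V)

theorem exists_isBikernel_boxArc_comm :
    (∃ B, IsBikernel (boxArc G1 H1) (boxArc G2 H2) B) ↔
      ∃ B, IsBikernel (boxArc H1 G1) (boxArc H2 G2) B :=
  ⟨fun ⟨_, hB⟩ => ⟨_, hB.boxArc_swap⟩, fun ⟨_, hB⟩ => ⟨_, hB.boxArc_swap⟩⟩

end Box

section Graph

variable {V W : Type*} {G1 G2 : V → V → Prop} {H1 H2 : W → W → Prop}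

theorem exists_isBikernel_boxArc_iff_nonempty_equiv [Nonempty V]
    (hG1 : ∀ a b, ReflTransGen G1 a b) (hG2 : ∀ a b, ¬ G2 a b)
    (hH1 : ∀ a b, ¬ H1 a b) (hH2 : ∀ a b, ReflTransGen H2 a b) :
    (∃ B, IsBikernel (boxArc G1 H1) (boxArc G2 H2) B) ↔ Nonempty (V ≃ W) := by
  have snd_eq {p q : V × W} (h : ReflTransGen (boxArc G1 H1) p q) : p.2 = q.2 :=
    ((reflTransGen_iff_eq (hH1 _)).1 h.boxArc_snd).symm
  have fst_eq {p q : V × W} (h : ReflTransGen (boxArc G2 H2) p q) : p.1 = q.1 :=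
    ((reflTransGen_iff_eq (hG2 _)).1 h.boxArc_fst).symm
  constructor
  · rintro ⟨B, hB⟩
    obtain ⟨⟨a₀, b₀⟩, -⟩ := hB.1
    have fst_bij : Function.Bijective fun p : B => p.1.1 := by
      refine ⟨?_, fun a => ?_⟩
      · rintro ⟨⟨a, b⟩, hp⟩ ⟨⟨a', b'⟩, hq⟩ (rfl : a = a')
        exact Subtype.ext (hB.eq_of_reflTransGen₂ hp hq ((hH2 b b').boxArc_right a))
      · obtain ⟨p, hp, h⟩ := hB.exists_reflTransGen₂ (a, b₀)
        exact ⟨⟨p, hp⟩, fst_eq h⟩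
    have snd_bij : Function.Bijective fun p : B => p.1.2 := by
      refine ⟨?_, fun b => ?_⟩
      · rintro ⟨⟨a, b⟩, hp⟩ ⟨⟨a', b'⟩, hq⟩ (rfl : b = b')
        exact Subtype.ext (hB.eq_of_reflTransGen₁ hp hq ((hG1 a a').boxArc_left b))
      · obtain ⟨p, hp, h⟩ := hB.exists_reflTransGen₁ (a₀, b)
        exact ⟨⟨p, hp⟩, (snd_eq h).symm⟩
    exact ⟨(Equiv.ofBijective _ fst_bij).symm.trans (Equiv.ofBijective _ snd_bij)⟩
  · rintro ⟨e⟩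
    refine ⟨{p | e p.1 = p.2}, isBikernel_iff_reflTransGen.2 ⟨?_, ?_, ?_, ?_, ?_⟩⟩
    · exact ⟨(Classical.arbitrary V, e (Classical.arbitrary V)), rfl⟩
    · rintro ⟨a, _⟩ (rfl : e a = _) ⟨a', _⟩ (rfl : e a' = _) h
      simpa using snd_eq h
    · rintro ⟨a, _⟩ (rfl : e a = _) ⟨a', _⟩ (rfl : e a' = _) h
      simpa using fst_eq h
    · rintro ⟨a, b⟩
      exact ⟨(e.symm b, b), by simp, (hG1 a _).boxArc_left b⟩
    · rintro ⟨a, b⟩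
      exact ⟨(a, e a), rfl, (hH2 _ b).boxArc_right a⟩

end Graph

section Cycle

variable {n : ℕ} {c : ℕ → Fin 2} {γ : Fin 2}

theorem not_cycArc_out {x : Fin n} (h : c x ≠ γ) (y : Fin n) : ¬ cycArc n c γ x y :=
  fun hxy => h hxy.2

theorem not_cycArc_of_forall_eq {γ' : Fin 2} (hc : ∀ x : Fin n, c x = γ) (h : γ' ≠ γ)
    (x y : Fin n) : ¬ cycArc n c γ' x y :=
  not_cycArc_out ((hc x).trans_ne h.symm) y

variable [NeZero n]

theorem cycArc_iff {x y : Fin n} : cycArc n c γ x y ↔ y = x + 1 ∧ c x = γ := by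
  simp [cycArc, Fin.ext_iff, Fin.val_add]

theorem not_cycArc_in {y : Fin n} (h : c ↑(y - 1) ≠ γ) (x : Fin n) : ¬ cycArc n c γ x y := by
  rintro hxy
  obtain ⟨rfl, hx⟩ := cycArc_iff.1 hxy
  simp [hx] at h

open Fin.NatCast in
theorem reflTransGen_cycArc_of_forall_eq (hc : ∀ x : Fin n, c x = γ) (x y : Fin n) :
    ReflTransGen (cycArc n c γ) x y := by
  have step (k : ℕ) : ReflTransGen (cycArc n c γ) x (x + (k : Fin n)) := by
    induction k with
    | zero => simpa using ReflTransGen.refl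
    | succ k ih => exact ih.tail (cycArc_iff.2 ⟨by rw [Nat.cast_succ, add_assoc], hc _⟩)
  simpa using step (y - x).val

def IsAlternating (n : ℕ) [NeZero n] (c : ℕ → Fin 2) : Prop :=
  ∀ x : Fin n, c ↑(x + 1) ≠ c x

theorem isBikernel_cycArc_of_isAlternating (hc : IsAlternating n c) :
    IsBikernel (cycArc n c 0) (cycArc n c 1) {x | c x = 1} := by
  have succ_eq {x : Fin n} (hx : c x ≠ 1) : c ↑(x + 1) = 1 := fin_two_eq_of_ne_of_ne (hc x) hx.symm
  have pred_eq {x : Fin n} (hx : c x ≠ 1) : c ↑(x - 1) = 1 :=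
    fin_two_eq_of_ne_of_ne (by simpa using (hc (x - 1)).symm) hx.symm
  refine isBikernel_iff_reflTransGen.2 ⟨?_, fun u hu v _ h => ?_, fun u _ v hv h => ?_,
    fun v => ?_, fun v => ?_⟩
  · by_cases h0 : c (0 : Fin n) = 1
    exacts [⟨0, h0⟩, ⟨_, succ_eq h0⟩]
  · exact ((reflTransGen_iff_eq (not_cycArc_out (by simp_all))).1 h).symm
  · refine (reflTransGen_iff_eq_of_forall_not_to (not_cycArc_in fun h => ?_)).1 h
    exact hc (v - 1) (by simp_all)
  · by_cases hv : c v = 1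
    exacts [⟨v, hv, .refl⟩, ⟨v + 1, succ_eq hv, .single (cycArc_iff.2 ⟨rfl, by omega⟩)⟩]
  · by_cases hv : c v = 1
    exacts [⟨v, hv, .refl⟩, ⟨v - 1, pred_eq hv, .single (cycArc_iff.2 ⟨by simp, pred_eq hv⟩)⟩]

end Cycle

section BoxCycle

variable {n1 n2 : ℕ} [NeZero n1] [NeZero n2] {c1 c2 : ℕ → Fin 2}
  {B : Set (Fin n1 × Fin n2)}

theorem IsBikernel.ne_of_boxArc_cycArc
    (hB : IsBikernel (boxArc (cycArc n1 c1 0) (cycArc n2 c2 0))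
      (boxArc (cycArc n1 c1 1) (cycArc n2 c2 1)) B)
    (hn1 : 2 ≤ n1) {x : Fin n1} (hx : c1 ↑(x + 1) = c1 x) (y : Fin n2) : c2 y ≠ c1 x := by
  intro hy
  obtain h0 | h1 : c1 x = 0 ∨ c1 x = 1 := by omega
  · have hp : (x + 1, y + 1) ∈ B := hB.mem_of_forall_not_in₂
      (not_boxArc_in (not_cycArc_in (by simp [h0])) (not_cycArc_in (by simp [hy, h0])))
    have hq : (x + 1 + 1, y + 1) ∈ B := hB.mem_of_forall_not_in₂
      (not_boxArc_in (not_cycArc_in (by simp [hx, h0])) (not_cycArc_in (by simp [hy, h0])))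
    have := hB.eq_of_reflTransGen₁ hp hq (.single (.inr ⟨rfl, cycArc_iff.2 ⟨rfl, hx.trans h0⟩⟩))
    exact Fin.add_one_ne_self hn1 (x + 1) (congrArg Prod.fst this).symm
  · have hp : (x, y) ∈ B := hB.mem_of_forall_not_out₁
      (not_boxArc_out (not_cycArc_out (by simp [h1])) (not_cycArc_out (by simp [hy, h1])))
    have hq : (x + 1, y) ∈ B := hB.mem_of_forall_not_out₁
      (not_boxArc_out (not_cycArc_out (by simp [hx, h1])) (not_cycArc_out (by simp [hy, h1])))
    have := hB.eq_of_reflTransGen₂ hp hq (.single (.inr ⟨rfl, cycArc_iff.2 ⟨rfl, h1⟩⟩))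
    exact Fin.add_one_ne_self hn1 x (congrArg Prod.fst this).symm

theorem IsBikernel.monochromatic_of_not_isAlternating
    (hB : IsBikernel (boxArc (cycArc n1 c1 0) (cycArc n2 c2 0))
      (boxArc (cycArc n1 c1 1) (cycArc n2 c2 1)) B)
    (hn1 : 2 ≤ n1) (hn2 : 2 ≤ n2) (h : ¬ IsAlternating n1 c1) :
    ∃ b1 b2 : Fin 2, b1 ≠ b2 ∧ (∀ x : Fin n1, c1 x = b1) ∧ ∀ y : Fin n2, c2 y = b2 := by
  obtain ⟨x, hx⟩ : ∃ x : Fin n1, c1 ↑(x + 1) = c1 x := by simpa [IsAlternating] using h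
  have hc2 (y : Fin n2) : c2 y = c2 0 :=
    fin_two_eq_of_ne_of_ne (hB.ne_of_boxArc_cycArc hn1 hx y) (hB.ne_of_boxArc_cycArc hn1 hx 0)
  have hc1 (x' : Fin n1) : c1 x' = c1 x :=
    fin_two_eq_of_ne_of_ne
      (hB.boxArc_swap.ne_of_boxArc_cycArc hn2 ((hc2 _).trans (hc2 0).symm) x')
      (hB.ne_of_boxArc_cycArc hn1 hx 0).symm
  exact ⟨c1 x, c2 0, (hB.ne_of_boxArc_cycArc hn1 hx 0).symm, hc1, hc2⟩

theorem IsBikernel.isAlternating_or_monochromatic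
    (hB : IsBikernel (boxArc (cycArc n1 c1 0) (cycArc n2 c2 0))
      (boxArc (cycArc n1 c1 1) (cycArc n2 c2 1)) B)
    (hn1 : 2 ≤ n1) (hn2 : 2 ≤ n2) :
    (IsAlternating n1 c1 ∧ IsAlternating n2 c2) ∨
      ∃ b1 b2 : Fin 2, b1 ≠ b2 ∧ (∀ x : Fin n1, c1 x = b1) ∧ ∀ y : Fin n2, c2 y = b2 := by
  by_cases hA1 : IsAlternating n1 c1
  · by_cases hA2 : IsAlternating n2 c2
    · exact .inl ⟨hA1, hA2⟩
    · obtain ⟨b2, b1, hb, hc2, hc1⟩ :=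
        hB.boxArc_swap.monochromatic_of_not_isAlternating hn2 hn1 hA2
      exact .inr ⟨b1, b2, hb.symm, hc1, hc2⟩
  · exact .inr (hB.monochromatic_of_not_isAlternating hn1 hn2 hA1)

theorem exists_isBikernel_boxArc_cycArc_iff_of_monochromatic {b1 b2 : Fin 2} (hb : b1 ≠ b2)
    (hc1 : ∀ x : Fin n1, c1 x = b1) (hc2 : ∀ y : Fin n2, c2 y = b2) :
    (∃ B, IsBikernel (boxArc (cycArc n1 c1 0) (cycArc n2 c2 0))
      (boxArc (cycArc n1 c1 1) (cycArc n2 c2 1)) B) ↔ n1 = n2 := by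
  obtain ⟨rfl, rfl⟩ | ⟨rfl, rfl⟩ : b1 = 0 ∧ b2 = 1 ∨ b1 = 1 ∧ b2 = 0 := by omega
  · rw [exists_isBikernel_boxArc_iff_nonempty_equiv (reflTransGen_cycArc_of_forall_eq hc1)
      (not_cycArc_of_forall_eq hc1 (by decide)) (not_cycArc_of_forall_eq hc2 (by decide))
      (reflTransGen_cycArc_of_forall_eq hc2), Fin.equiv_iff_eq]
  · rw [exists_isBikernel_boxArc_comm, exists_isBikernel_boxArc_iff_nonempty_equiv
      (reflTransGen_cycArc_of_forall_eq hc2) (not_cycArc_of_forall_eq hc2 (by decide))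
      (not_cycArc_of_forall_eq hc1 (by decide)) (reflTransGen_cycArc_of_forall_eq hc1),
      Fin.equiv_iff_eq, eq_comm]

end BoxCycle

/-- The Cartesian product of two bicolored directed cycles has a bikernel iff
either both cycles have bikernels, or both are monochromatic of the same length
and of opposite colors. -/
theorem box_cycles_bikernel_iff (n1 n2 : ℕ) (h1 : 2 ≤ n1) (h2 : 2 ≤ n2)
    (c1 c2 : ℕ → Fin 2) :
    (∃ B, IsBikernel (boxArc (cycArc n1 c1 0) (cycArc n2 c2 0))
        (boxArc (cycArc n1 c1 1) (cycArc n2 c2 1)) B) ↔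
      ((∃ B1, IsBikernel (cycArc n1 c1 0) (cycArc n1 c1 1) B1) ∧
       (∃ B2, IsBikernel (cycArc n2 c2 0) (cycArc n2 c2 1) B2)) ∨
      (n1 = n2 ∧ ∃ b1 b2 : Fin 2, b1 ≠ b2 ∧
        (∀ i, i < n1 → c1 i = b1) ∧ (∀ i, i < n2 → c2 i = b2)) := by
  have : NeZero n1 := ⟨by omega⟩
  have : NeZero n2 := ⟨by omega⟩
  constructor
  · rintro ⟨B, hB⟩
    rcases hB.isAlternating_or_monochromatic h1 h2 with ⟨hA1, hA2⟩ | ⟨b1, b2, hb, hc1, hc2⟩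
    · exact .inl ⟨⟨_, isBikernel_cycArc_of_isAlternating hA1⟩,
        ⟨_, isBikernel_cycArc_of_isAlternating hA2⟩⟩
    · exact .inr ⟨(exists_isBikernel_boxArc_cycArc_iff_of_monochromatic hb hc1 hc2).1 ⟨B, hB⟩,
        b1, b2, hb, fun i hi => hc1 ⟨i, hi⟩, fun i hi => hc2 ⟨i, hi⟩⟩
  · rintro (⟨⟨B1, hB1⟩, ⟨B2, hB2⟩⟩ | ⟨hn, b1, b2, hb, hc1, hc2⟩)
    · exact ⟨_, hB1.prod hB2⟩
    · exact (exists_isBikernel_boxArc_cycArc_iff_of_monochromatic hb (fun x => hc1 x x.isLt)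
        (fun y => hc2 y y.isLt)).2 hn
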